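/- Let T1 be an (r × c1, v1)-near triple array and T2 an (r × c2, v2)-near triple array, with 2 ≤ r, 2 ≤ c1, 2 ≤ c2, max(r,c1) ≤ v1 ≤ r·c1 and max(r,c2) ≤ v2 ≤ r·c2, with average replication numbers e1, e2 and parameters λ_rr^1, λ_cc^1 and λ_rr^2, λ_cc^2. Assume (1) max(⌈e1⌉, ⌈e2⌉) − min(⌊e1⌋, ⌊e2⌋) ≤ 1, (2) λ_rr^1 is an integer or λ_rr^2 is an integer, and (3) λ_cc^1 ≤ 1 and λ_cc^2 ≤ 1. Then the r × (c1 + c2) design T on v1 + v2 symbols whose row i is the concatenation of row i of T1 and row i of T2 (with the two symbol sets made disjoint) is an (r × (c1 + c2), v1 + v2)-near triple array. -/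

import Mathlib

open Finset

/-- An `r × c` row-column design on `v` symbols is binary if no symbol occurs
twice in any row or in any column. -/
def IsBinaryDesign {r c v : ℕ} (T : Fin r × Fin c → Fin v) : Prop :=
  (∀ (i : Fin r) (j j' : Fin c), j ≠ j' → T (i, j) ≠ T (i, j')) ∧
  (∀ (j : Fin c) (i i' : Fin r), i ≠ i' → T (i, j) ≠ T (i', j))

/-- The replication number of a symbol `s`: the number of cells containing `s`. -/
def replNum {r c v : ℕ} (T : Fin r × Fin c → Fin v) (s : Fin v) : ℕ :=
  (Finset.univ.filter (fun p : Fin r × Fin c => T p = s)).card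

/-- The average replication number `e = rc/v` as a rational number. -/
def avgRepl (r c v : ℕ) : ℚ := ((r : ℚ) * (c : ℚ)) / (v : ℚ)

/-- A design is equireplicate if `e = rc/v` is an integer and every symbol has
replication number `e`. -/
def IsEquireplicate {r c v : ℕ} (T : Fin r × Fin c → Fin v) : Prop :=
  (avgRepl r c v).den = 1 ∧ ∀ s : Fin v, (replNum T s : ℚ) = avgRepl r c v

/-- A design is near equireplicate if `e = rc/v` is not an integer and every symbol
has replication number `⌊e⌋` or `⌈e⌉`. -/
def IsNearEquireplicate {r c v : ℕ} (T : Fin r × Fin c → Fin v) : Prop :=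
  (avgRepl r c v).den ≠ 1 ∧
  ∀ s : Fin v, (replNum T s : ℤ) = ⌊avgRepl r c v⌋ ∨ (replNum T s : ℤ) = ⌈avgRepl r c v⌉

/-- The set of symbols occurring in row `i`. -/
def rowSet {r c v : ℕ} (T : Fin r × Fin c → Fin v) (i : Fin r) : Finset (Fin v) :=
  Finset.univ.image (fun j : Fin c => T (i, j))

/-- The set of symbols occurring in column `j`. -/
def colSet {r c v : ℕ} (T : Fin r × Fin c → Fin v) (j : Fin c) : Finset (Fin v) :=
  Finset.univ.image (fun i : Fin r => T (i, j))

/-- Average row-column intersection size `λ_rc`. -/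
def lamRC {r c v : ℕ} (T : Fin r × Fin c → Fin v) : ℚ :=
  (∑ i : Fin r, ∑ j : Fin c, ((rowSet T i ∩ colSet T j).card : ℚ)) / ((r : ℚ) * (c : ℚ))

/-- Average row-row intersection size `λ_rr`. -/
def lamRR {r c v : ℕ} (T : Fin r × Fin c → Fin v) : ℚ :=
  (∑ p ∈ Finset.univ.filter (fun p : Fin r × Fin r => p.1 < p.2),
      ((rowSet T p.1 ∩ rowSet T p.2).card : ℚ)) / ((r : ℚ) * ((r : ℚ) - 1) / 2)

/-- Average column-column intersection size `λ_cc`. -/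
def lamCC {r c v : ℕ} (T : Fin r × Fin c → Fin v) : ℚ :=
  (∑ p ∈ Finset.univ.filter (fun p : Fin c × Fin c => p.1 < p.2),
      ((colSet T p.1 ∩ colSet T p.2).card : ℚ)) / ((c : ℚ) * ((c : ℚ) - 1) / 2)

/-- An `(r × c, v)`-near triple array. -/
def IsNearTripleArray {r c v : ℕ} (T : Fin r × Fin c → Fin v) : Prop :=
  IsBinaryDesign T ∧ (IsEquireplicate T ∨ IsNearEquireplicate T) ∧
  (∀ (i : Fin r) (j : Fin c),
    ((rowSet T i ∩ colSet T j).card : ℤ) = ⌊lamRC T⌋ ∨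
    ((rowSet T i ∩ colSet T j).card : ℤ) = ⌈lamRC T⌉) ∧
  (∀ i j : Fin r, i ≠ j →
    ((rowSet T i ∩ rowSet T j).card : ℤ) = ⌊lamRR T⌋ ∨
    ((rowSet T i ∩ rowSet T j).card : ℤ) = ⌈lamRR T⌉) ∧
  (∀ i j : Fin c, i ≠ j →
    ((colSet T i ∩ colSet T j).card : ℤ) = ⌊lamCC T⌋ ∨
    ((colSet T i ∩ colSet T j).card : ℤ) = ⌈lamCC T⌉)


/-! Put `m = min ⌊e₁⌋ ⌊e₂⌋`. By hypothesis (1) all replication numbers of `T₁` and `T₂` lie in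
`{m, m + 1}`, hence so does every `|Rᵢ ∩ Cⱼ|` of either array: for a binary design
`λ_rc = (∑ₛ eₛ²) / (∑ₛ eₛ)` is a weighted average of the `eₛ`, so `m ≤ λ_rc ≤ m + 1`.
In the concatenation every symbol, every row–column intersection and every pair of columns
comes from one of the two halves (columns from different halves are disjoint), so these
quantities still take only the values `m, m + 1`, resp. `0, 1` by (3). A family of integers
taking two consecutive values takes only the floor and the ceiling of its average, which gives
the replication, `λ_rc` and `λ_cc` conditions. Row–row intersections and the `λ_rr` simply add
up, and since one of the two `λ_rr` is an integer (2), floors and ceilings add up too. -/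

theorem eq_floor_or_eq_ceil_average_of_bounds {ι : Type*} {S : Finset ι} {f : ι → ℤ} {m : ℤ}
    (hf : ∀ j ∈ S, m ≤ f j ∧ f j ≤ m + 1) {i : ι} (hi : i ∈ S) :
    f i = ⌊(∑ j ∈ S, (f j : ℚ)) / #S⌋ ∨ f i = ⌈(∑ j ∈ S, (f j : ℚ)) / #S⌉ := by
  have hS : (0 : ℚ) < #S := by exact_mod_cast card_pos.mpr ⟨i, hi⟩
  have hlo : ∀ j ∈ S, (m : ℚ) ≤ f j := fun j hj => by exact_mod_cast (hf j hj).1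
  have hhi : ∀ j ∈ S, (f j : ℚ) ≤ m + 1 := fun j hj => by exact_mod_cast (hf j hj).2
  have hconst : ∀ a : ℚ, a * #S = ∑ _j ∈ S, a := fun a => by
    rw [sum_const, nsmul_eq_mul, mul_comm]
  rcases (hf i hi).1.eq_or_lt with h | h
  · left
    rw [← h, eq_comm, Int.floor_eq_iff, le_div_iff₀ hS, div_lt_iff₀ hS, hconst, hconst]
    exact ⟨sum_le_sum hlo, sum_lt_sum hhi ⟨i, hi, by rw [← h]; linarith⟩⟩
  · right
    rw [show f i = m + 1 by linarith [(hf i hi).2], eq_comm, Int.ceil_eq_iff, Int.cast_add,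
      Int.cast_one, add_sub_cancel_right, lt_div_iff₀ hS, div_le_iff₀ hS, hconst, hconst]
    exact ⟨sum_lt_sum hlo ⟨i, hi, by exact_mod_cast h⟩, sum_le_sum hhi⟩

section FloorCeil

variable {q : ℚ} {x : ℤ}

theorem floor_le_and_le_ceil_of_eq_floor_or_ceil (hx : x = ⌊q⌋ ∨ x = ⌈q⌉) :
    ⌊q⌋ ≤ x ∧ x ≤ ⌈q⌉ := by
  have := Int.floor_le_ceil q
  omega

theorem cast_eq_of_eq_floor_or_ceil_of_den_eq_one (hq : q.den = 1) (hx : x = ⌊q⌋ ∨ x = ⌈q⌉) :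
    (x : ℚ) = q := by
  rw [← (Rat.den_eq_one_iff q).mp hq, Int.floor_intCast, Int.ceil_intCast, or_self] at hx
  rw [hx, (Rat.den_eq_one_iff q).mp hq]

theorem add_eq_floor_or_ceil_add {a b : ℚ} {y : ℤ} (hab : a.den = 1 ∨ b.den = 1)
    (hx : x = ⌊a⌋ ∨ x = ⌈a⌉) (hy : y = ⌊b⌋ ∨ y = ⌈b⌉) :
    x + y = ⌊a + b⌋ ∨ x + y = ⌈a + b⌉ := by
  rcases hab with ha | hb
  · rw [← cast_eq_of_eq_floor_or_ceil_of_den_eq_one ha hx, Int.floor_intCast_add,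
      Int.ceil_intCast_add]
    omega
  · rw [← cast_eq_of_eq_floor_or_ceil_of_den_eq_one hb hy, Int.floor_add_intCast,
      Int.ceil_add_intCast]
    omega

end FloorCeil

section Design

variable {r c v : ℕ} {T : Fin r × Fin c → Fin v}

theorem isBinaryDesign_iff :
    IsBinaryDesign T ↔
      (∀ i, Function.Injective fun j => T (i, j)) ∧ ∀ j, Function.Injective fun i => T (i, j) := by
  simp only [IsBinaryDesign, Function.injective_iff_pairwise_ne]
  rfl

variable (T) in
theorem sum_replNum : ∑ s, replNum T s = r * c := by
  simp [replNum, ← card_eq_sum_card_fiberwise (fun p _ => mem_univ (T p))]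

theorem replNum_eq_sum_rows (h : ∀ i, Function.Injective fun j => T (i, j)) (s : Fin v) :
    replNum T s = ∑ i, if s ∈ rowSet T i then 1 else 0 := by
  rw [replNum, card_filter, Fintype.sum_prod_type]
  refine sum_congr rfl fun i _ => ?_
  calc ∑ j, (if T (i, j) = s then 1 else 0)
      = ∑ t ∈ univ.image (fun j => T (i, j)), if t = s then 1 else 0 :=
        (sum_image (f := fun t => if t = s then 1 else 0) (h i).injOn).symm
    _ = _ := sum_ite_eq' _ _ _

theorem replNum_eq_sum_cols (h : ∀ j, Function.Injective fun i => T (i, j)) (s : Fin v) :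
    replNum T s = ∑ j, if s ∈ colSet T j then 1 else 0 := by
  rw [replNum, card_filter, Fintype.sum_prod_type_right]
  refine sum_congr rfl fun j _ => ?_
  calc ∑ i, (if T (i, j) = s then 1 else 0)
      = ∑ t ∈ univ.image (fun i => T (i, j)), if t = s then 1 else 0 :=
        (sum_image (f := fun t => if t = s then 1 else 0) (h j).injOn).symm
    _ = _ := sum_ite_eq' _ _ _

theorem sum_card_rowSet_inter_colSet (hT : IsBinaryDesign T) :
    ∑ i, ∑ j, #(rowSet T i ∩ colSet T j) = ∑ s, replNum T s ^ 2 := by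
  have hcard : ∀ i j, #(rowSet T i ∩ colSet T j) =
      ∑ s, (if s ∈ rowSet T i then 1 else 0) * (if s ∈ colSet T j then 1 else 0) := by
    intro i j
    simp [inter_comm]
  have hrepl : ∀ s, replNum T s ^ 2 =
      (∑ i, if s ∈ rowSet T i then 1 else 0) * ∑ j, if s ∈ colSet T j then 1 else 0 := by
    intro s
    rw [sq, ← replNum_eq_sum_rows (isBinaryDesign_iff.mp hT).1,
      ← replNum_eq_sum_cols (isBinaryDesign_iff.mp hT).2]
  simp_rw [hcard, hrepl, sum_mul_sum]
  symm
  rw [sum_comm]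
  exact sum_congr rfl fun _ _ => sum_comm

end Design

section Conditions

variable {r c v : ℕ} {T : Fin r × Fin c → Fin v} {m : ℤ}

variable (T) in
theorem avgRepl_eq_average :
    avgRepl r c v = (∑ s, ((replNum T s : ℤ) : ℚ)) / #(univ : Finset (Fin v)) := by
  rw [avgRepl, card_univ, Fintype.card_fin]
  push_cast
  rw [← Nat.cast_sum, sum_replNum, Nat.cast_mul]

theorem isEquireplicate_or_isNearEquireplicate_iff :
    IsEquireplicate T ∨ IsNearEquireplicate T ↔
      ∀ s, (replNum T s : ℤ) = ⌊avgRepl r c v⌋ ∨ (replNum T s : ℤ) = ⌈avgRepl r c v⌉ := by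
  constructor
  · rintro (⟨-, h⟩ | ⟨-, h⟩) s
    · left
      rw [← h s, Int.floor_natCast]
    · exact h s
  · intro h
    by_cases hden : (avgRepl r c v).den = 1
    · exact .inl ⟨hden, fun s => by
        exact_mod_cast cast_eq_of_eq_floor_or_ceil_of_den_eq_one hden (h s)⟩
    · exact .inr ⟨hden, h⟩

theorem isEquireplicate_or_isNearEquireplicate_of_bounds
    (h : ∀ s, m ≤ replNum T s ∧ (replNum T s : ℤ) ≤ m + 1) :
    IsEquireplicate T ∨ IsNearEquireplicate T :=
  isEquireplicate_or_isNearEquireplicate_iff.mpr fun s => avgRepl_eq_average T ▸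
    eq_floor_or_eq_ceil_average_of_bounds (fun s _ => h s) (mem_univ s)

theorem lamRC_eq_average :
    lamRC T = (∑ p : Fin r × Fin c, ((#(rowSet T p.1 ∩ colSet T p.2) : ℤ) : ℚ)) /
      #(univ : Finset (Fin r × Fin c)) := by
  rw [lamRC, card_univ, Fintype.card_prod, Fintype.card_fin, Fintype.card_fin,
    Fintype.sum_prod_type]
  push_cast
  rfl

theorem lamCC_eq_average :
    lamCC T = (∑ p ∈ univ.filter (fun p : Fin c × Fin c => p.1 < p.2),
        ((#(colSet T p.1 ∩ colSet T p.2) : ℤ) : ℚ)) /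
      #(univ.filter (fun p : Fin c × Fin c => p.1 < p.2)) := by
  rw [lamCC, Fintype.card_product_filter_lt, Fintype.card_fin, Nat.cast_choose_two]
  push_cast
  rfl

theorem card_rowSet_inter_colSet_eq_floor_or_ceil_of_bounds
    (h : ∀ i j, m ≤ #(rowSet T i ∩ colSet T j) ∧ (#(rowSet T i ∩ colSet T j) : ℤ) ≤ m + 1)
    (i : Fin r) (j : Fin c) :
    (#(rowSet T i ∩ colSet T j) : ℤ) = ⌊lamRC T⌋ ∨
      (#(rowSet T i ∩ colSet T j) : ℤ) = ⌈lamRC T⌉ := by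
  rw [lamRC_eq_average]
  exact eq_floor_or_eq_ceil_average_of_bounds
    (f := fun p : Fin r × Fin c => (#(rowSet T p.1 ∩ colSet T p.2) : ℤ))
    (fun p _ => h p.1 p.2) (mem_univ (i, j))

theorem card_colSet_inter_colSet_eq_floor_or_ceil_of_bounds
    (h : ∀ i j, i ≠ j →
      m ≤ #(colSet T i ∩ colSet T j) ∧ (#(colSet T i ∩ colSet T j) : ℤ) ≤ m + 1)
    {i j : Fin c} (hij : i ≠ j) :
    (#(colSet T i ∩ colSet T j) : ℤ) = ⌊lamCC T⌋ ∨
      (#(colSet T i ∩ colSet T j) : ℤ) = ⌈lamCC T⌉ := by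
  wlog hlt : i < j generalizing i j
  · rw [inter_comm]
    exact this hij.symm (lt_of_le_of_ne (not_lt.mp hlt) hij.symm)
  rw [lamCC_eq_average]
  exact eq_floor_or_eq_ceil_average_of_bounds
    (f := fun p : Fin c × Fin c => (#(colSet T p.1 ∩ colSet T p.2) : ℤ))
    (fun p hp => h p.1 p.2 (mem_filter.mp hp).2.ne) (mem_filter.mpr ⟨mem_univ (i, j), hlt⟩)

theorem lamRC_bounds (hT : IsBinaryDesign T)
    (h : ∀ s, m ≤ replNum T s ∧ (replNum T s : ℤ) ≤ m + 1) (hrc : 0 < r * c) :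
    m ≤ lamRC T ∧ lamRC T ≤ m + 1 := by
  have hsum : (r * c : ℚ) = ∑ s, (replNum T s : ℚ) := by exact_mod_cast (sum_replNum T).symm
  have hpos : (0 : ℚ) < r * c := by exact_mod_cast hrc
  have hrepl : ∀ s, (m : ℚ) ≤ replNum T s ∧ (replNum T s : ℚ) ≤ m + 1 := fun s => by
    exact_mod_cast h s
  have hnum : ∑ i, ∑ j, (#(rowSet T i ∩ colSet T j) : ℚ) = ∑ s, (replNum T s : ℚ) ^ 2 := by
    exact_mod_cast sum_card_rowSet_inter_colSet hT
  rw [lamRC, hnum, le_div_iff₀ hpos, div_le_iff₀ hpos, hsum, mul_sum, mul_sum]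
  constructor <;> refine sum_le_sum fun s _ => ?_
  · nlinarith [mul_nonneg (Nat.cast_nonneg (α := ℚ) (replNum T s)) (sub_nonneg.mpr (hrepl s).1)]
  · nlinarith [mul_nonneg (Nat.cast_nonneg (α := ℚ) (replNum T s)) (sub_nonneg.mpr (hrepl s).2)]

end Conditions

section NearTripleArray

variable {r c v : ℕ} {T : Fin r × Fin c → Fin v} {m : ℤ}

theorem replNum_bounds (hT : IsEquireplicate T ∨ IsNearEquireplicate T)
    (hlo : m ≤ ⌊avgRepl r c v⌋) (hhi : ⌈avgRepl r c v⌉ ≤ m + 1) (s : Fin v) :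
    m ≤ replNum T s ∧ (replNum T s : ℤ) ≤ m + 1 := by
  have := floor_le_and_le_ceil_of_eq_floor_or_ceil
    (isEquireplicate_or_isNearEquireplicate_iff.mp hT s)
  omega

theorem IsNearTripleArray.card_rowSet_inter_colSet_bounds (hT : IsNearTripleArray T)
    (h : ∀ s, m ≤ replNum T s ∧ (replNum T s : ℤ) ≤ m + 1) (i : Fin r) (j : Fin c) :
    m ≤ #(rowSet T i ∩ colSet T j) ∧ (#(rowSet T i ∩ colSet T j) : ℤ) ≤ m + 1 := by
  obtain ⟨hlo, hhi⟩ := lamRC_bounds hT.1 h (Nat.mul_pos i.pos j.pos)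
  have := Int.le_floor.mpr hlo
  have := Int.ceil_le.mpr (by exact_mod_cast hhi : lamRC T ≤ ((m + 1 : ℤ) : ℚ))
  have := floor_le_and_le_ceil_of_eq_floor_or_ceil (hT.2.2.1 i j)
  omega

theorem IsNearTripleArray.card_colSet_inter_colSet_le_one (hT : IsNearTripleArray T)
    (h : lamCC T ≤ 1) {i j : Fin c} (hij : i ≠ j) : #(colSet T i ∩ colSet T j) ≤ 1 := by
  have := Int.ceil_le.mpr (by exact_mod_cast h : lamCC T ≤ ((1 : ℤ) : ℚ))
  have := (floor_le_and_le_ceil_of_eq_floor_or_ceil (hT.2.2.2.2 i j hij)).2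
  omega

end NearTripleArray

@[simp] theorem Fin.castAdd_ne_natAdd {m n : ℕ} (i : Fin m) (j : Fin n) :
    Fin.castAdd n i ≠ Fin.natAdd m j := by
  simp only [ne_eq, Fin.ext_iff, Fin.val_castAdd, Fin.val_natAdd]
  omega

@[simp] theorem Fin.natAdd_ne_castAdd {m n : ℕ} (i : Fin m) (j : Fin n) :
    Fin.natAdd m j ≠ Fin.castAdd n i :=
  (Fin.castAdd_ne_natAdd i j).symm

theorem Fin.exists_fin_add {m n : ℕ} {P : Fin (m + n) → Prop} :
    (∃ i, P i) ↔ (∃ i, P (Fin.castAdd n i)) ∨ ∃ j, P (Fin.natAdd m j) := by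
  simpa only [not_forall, not_not, not_and_or] using
    not_congr (Fin.forall_fin_add fun i => ¬P i)

theorem Finset.disjSum_inter_disjSum {α β : Type*} [DecidableEq α] [DecidableEq β]
    (A A' : Finset α) (B B' : Finset β) :
    A.disjSum B ∩ A'.disjSum B' = (A ∩ A').disjSum (B ∩ B') := by
  ext (x | x) <;> simp

section RowConcat

variable {r c1 c2 v1 v2 : ℕ}

def rowConcat (T1 : Fin r × Fin c1 → Fin v1) (T2 : Fin r × Fin c2 → Fin v2) :
    Fin r × Fin (c1 + c2) → Fin (v1 + v2) := fun p =>
  Fin.append (fun j => Fin.castAdd v2 (T1 (p.1, j))) (fun j => Fin.natAdd v1 (T2 (p.1, j))) p.2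

def disjSumFin (A : Finset (Fin v1)) (B : Finset (Fin v2)) : Finset (Fin (v1 + v2)) :=
  (A.disjSum B).map finSumFinEquiv.toEmbedding

theorem card_disjSumFin_inter (A A' : Finset (Fin v1)) (B B' : Finset (Fin v2)) :
    #(disjSumFin A B ∩ disjSumFin A' B') = #(A ∩ A') + #(B ∩ B') := by
  rw [disjSumFin, disjSumFin, ← map_inter, card_map, disjSum_inter_disjSum, card_disjSum]

variable (T1 : Fin r × Fin c1 → Fin v1) (T2 : Fin r × Fin c2 → Fin v2)

theorem rowConcat_apply (i : Fin r) (j : Fin (c1 + c2)) :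
    rowConcat T1 T2 (i, j) = if h : (j : ℕ) < c1
      then Fin.castLE (Nat.le_add_right v1 v2) (T1 (i, ⟨(j : ℕ), h⟩))
      else Fin.natAdd v1 (T2 (i, ⟨(j : ℕ) - c1, by have := j.isLt; omega⟩)) := by
  induction j using Fin.addCases <;> simp [rowConcat, Fin.castAdd]

@[simp] theorem rowConcat_castAdd (i : Fin r) (j : Fin c1) :
    rowConcat T1 T2 (i, Fin.castAdd c2 j) = Fin.castAdd v2 (T1 (i, j)) := by
  simp [rowConcat]

@[simp] theorem rowConcat_natAdd (i : Fin r) (j : Fin c2) :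
    rowConcat T1 T2 (i, Fin.natAdd c1 j) = Fin.natAdd v1 (T2 (i, j)) := by
  simp [rowConcat]

@[simp] theorem replNum_rowConcat_castAdd (s : Fin v1) :
    replNum (rowConcat T1 T2) (Fin.castAdd v2 s) = replNum T1 s := by
  simp only [replNum, card_filter, Fintype.sum_prod_type, Fin.sum_univ_add, rowConcat_castAdd,
    rowConcat_natAdd]
  simp

@[simp] theorem replNum_rowConcat_natAdd (s : Fin v2) :
    replNum (rowConcat T1 T2) (Fin.natAdd v1 s) = replNum T2 s := by
  simp only [replNum, card_filter, Fintype.sum_prod_type, Fin.sum_univ_add, rowConcat_castAdd,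
    rowConcat_natAdd]
  simp

theorem rowSet_rowConcat (i : Fin r) :
    rowSet (rowConcat T1 T2) i = disjSumFin (rowSet T1 i) (rowSet T2 i) := by
  ext s
  induction s using Fin.addCases <;> simp [rowSet, disjSumFin, Fin.exists_fin_add]

theorem colSet_rowConcat_castAdd (j : Fin c1) :
    colSet (rowConcat T1 T2) (Fin.castAdd c2 j) = disjSumFin (colSet T1 j) ∅ := by
  ext s
  induction s using Fin.addCases <;> simp [colSet, disjSumFin]

theorem colSet_rowConcat_natAdd (j : Fin c2) :
    colSet (rowConcat T1 T2) (Fin.natAdd c1 j) = disjSumFin ∅ (colSet T2 j) := by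
  ext s
  induction s using Fin.addCases <;> simp [colSet, disjSumFin]

theorem card_rowSet_inter_rowSet_rowConcat (i i' : Fin r) :
    #(rowSet (rowConcat T1 T2) i ∩ rowSet (rowConcat T1 T2) i') =
      #(rowSet T1 i ∩ rowSet T1 i') + #(rowSet T2 i ∩ rowSet T2 i') := by
  rw [rowSet_rowConcat, rowSet_rowConcat, card_disjSumFin_inter]

@[simp] theorem card_rowSet_inter_colSet_rowConcat_castAdd (i : Fin r) (j : Fin c1) :
    #(rowSet (rowConcat T1 T2) i ∩ colSet (rowConcat T1 T2) (Fin.castAdd c2 j)) =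
      #(rowSet T1 i ∩ colSet T1 j) := by
  simp [rowSet_rowConcat, colSet_rowConcat_castAdd, card_disjSumFin_inter]

@[simp] theorem card_rowSet_inter_colSet_rowConcat_natAdd (i : Fin r) (j : Fin c2) :
    #(rowSet (rowConcat T1 T2) i ∩ colSet (rowConcat T1 T2) (Fin.natAdd c1 j)) =
      #(rowSet T2 i ∩ colSet T2 j) := by
  simp [rowSet_rowConcat, colSet_rowConcat_natAdd, card_disjSumFin_inter]

theorem lamRR_rowConcat : lamRR (rowConcat T1 T2) = lamRR T1 + lamRR T2 := by
  simp only [lamRR, card_rowSet_inter_rowSet_rowConcat, Nat.cast_add, sum_add_distrib, add_div]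

variable {T1 T2}

theorem IsBinaryDesign.rowConcat (h1 : IsBinaryDesign T1) (h2 : IsBinaryDesign T2) :
    IsBinaryDesign (rowConcat T1 T2) := by
  rw [isBinaryDesign_iff] at h1 h2 ⊢
  refine ⟨fun i => Fin.append_injective_iff.mpr
    ⟨(Fin.castAdd_injective _ _).comp (h1.1 i), (Fin.natAdd_injective _ _).comp (h2.1 i),
      fun _ _ => Fin.castAdd_ne_natAdd _ _⟩, Fin.addCases (fun j => ?_) (fun j => ?_)⟩
  · simp only [rowConcat_castAdd]
    exact (Fin.castAdd_injective _ _).comp (h1.2 j)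
  · simp only [rowConcat_natAdd]
    exact (Fin.natAdd_injective _ _).comp (h2.2 j)

theorem card_colSet_inter_colSet_rowConcat_le_one
    (h1 : ∀ j j' : Fin c1, j ≠ j' → #(colSet T1 j ∩ colSet T1 j') ≤ 1)
    (h2 : ∀ j j' : Fin c2, j ≠ j' → #(colSet T2 j ∩ colSet T2 j') ≤ 1)
    {j j' : Fin (c1 + c2)} (hjj' : j ≠ j') :
    #(colSet (rowConcat T1 T2) j ∩ colSet (rowConcat T1 T2) j') ≤ 1 := by
  induction j using Fin.addCases <;> induction j' using Fin.addCases <;>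
    simp_all [colSet_rowConcat_castAdd, colSet_rowConcat_natAdd, card_disjSumFin_inter]

end RowConcat

/-- Juxtaposition of two near triple arrays with compatible parameters
(replication intervals overlapping in consecutive integers, one of the `λ_rr`
integral, both `λ_cc ≤ 1`) is a near triple array. -/
theorem nearTripleArray_concat {r c1 c2 v1 v2 : ℕ}
    (T1 : Fin r × Fin c1 → Fin v1) (hT1 : IsNearTripleArray T1)
    (T2 : Fin r × Fin c2 → Fin v2) (hT2 : IsNearTripleArray T2)
    (h1 : max ⌈avgRepl r c1 v1⌉ ⌈avgRepl r c2 v2⌉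
        - min ⌊avgRepl r c1 v1⌋ ⌊avgRepl r c2 v2⌋ ≤ 1)
    (h2 : (lamRR T1).den = 1 ∨ (lamRR T2).den = 1)
    (h3 : lamCC T1 ≤ 1 ∧ lamCC T2 ≤ 1)
    (T : Fin r × Fin (c1 + c2) → Fin (v1 + v2))
    (hT : ∀ (i : Fin r) (j : Fin (c1 + c2)),
      T (i, j) = if h : (j : ℕ) < c1
        then Fin.castLE (Nat.le_add_right v1 v2) (T1 (i, ⟨(j : ℕ), h⟩))
        else Fin.natAdd v1 (T2 (i, ⟨(j : ℕ) - c1, by have := j.isLt; omega⟩))) :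
    IsNearTripleArray T := by
  obtain rfl : T = rowConcat T1 T2 :=
    funext fun p => (hT p.1 p.2).trans (rowConcat_apply T1 T2 p.1 p.2).symm
  set m := min ⌊avgRepl r c1 v1⌋ ⌊avgRepl r c2 v2⌋
  have hrepl1 := replNum_bounds (m := m) hT1.2.1 (min_le_left _ _)
    (by have := le_max_left ⌈avgRepl r c1 v1⌉ ⌈avgRepl r c2 v2⌉; omega)
  have hrepl2 := replNum_bounds (m := m) hT2.2.1 (min_le_right _ _)
    (by have := le_max_right ⌈avgRepl r c1 v1⌉ ⌈avgRepl r c2 v2⌉; omega)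
  refine ⟨hT1.1.rowConcat hT2.1, ?_, ?_, fun i i' hii' => ?_, fun j j' hjj' => ?_⟩
  · exact isEquireplicate_or_isNearEquireplicate_of_bounds (m := m)
      (Fin.addCases (by simpa using hrepl1) (by simpa using hrepl2))
  · refine card_rowSet_inter_colSet_eq_floor_or_ceil_of_bounds (m := m)
      fun i => Fin.addCases (fun j => ?_) (fun j => ?_)
    · simpa using hT1.card_rowSet_inter_colSet_bounds hrepl1 i j
    · simpa using hT2.card_rowSet_inter_colSet_bounds hrepl2 i j
  · rw [card_rowSet_inter_rowSet_rowConcat, lamRR_rowConcat, Nat.cast_add]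
    exact add_eq_floor_or_ceil_add h2 (hT1.2.2.2.1 i i' hii') (hT2.2.2.2.1 i i' hii')
  · refine card_colSet_inter_colSet_eq_floor_or_ceil_of_bounds (m := 0)
      (fun j j' hjj' => ⟨by positivity, ?_⟩) hjj'
    exact_mod_cast card_colSet_inter_colSet_rowConcat_le_one
      (fun _ _ => hT1.card_colSet_inter_colSet_le_one h3.1)
      (fun _ _ => hT2.card_colSet_inter_colSet_le_one h3.2) hjj'
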